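/- If i ≥ 1 and i+1 ∈ R(f), then ν_i(∂f) = ν_i(f) − 1 and ρ_i(∂f) = ∂(ρ_i(f)). -/

import Mathlib

open scoped Classical

noncomputable section

/-- `f` is a frequency sequence: `f 0 = 0` and finite support. -/
def IsFreq (f : ℕ → ℕ) : Prop := f 0 = 0 ∧ (Function.support f).Finite

/-- size `|f| = ∑ i·f i`. -/
def fsize (f : ℕ → ℕ) : ℕ := ∑ᶠ n, n * f n

/-- length `ℓ(f) = ∑ f i`. -/
def flen (f : ℕ → ℕ) : ℕ := ∑ᶠ n, f n

/-- the support `S(f)`. -/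
def suppF (f : ℕ → ℕ) : Set ℕ := {i | 1 ≤ i ∧ f i ≠ 0}

/-- `[i,j]` is a spread of `f`: a maximal interval contained in the support. -/
def IsSpread (f : ℕ → ℕ) (i j : ℕ) : Prop :=
  1 ≤ i ∧ i ≤ j ∧ (∀ k, i ≤ k → k ≤ j → f k ≠ 0) ∧ (i = 1 ∨ f (i - 1) = 0) ∧ f (j + 1) = 0

/-- `L(f)`: every other element of each spread, starting from the left end. -/
def Lset (f : ℕ → ℕ) : Set ℕ :=
  {q | ∃ i j, IsSpread f i j ∧ i ≤ q ∧ q ≤ j ∧ (q - i) % 2 = 0}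

/-- `R(f)`: every other element of each spread, starting from the right end. -/
def Rset (f : ℕ → ℕ) : Set ℕ :=
  {q | ∃ i j, IsSpread f i j ∧ i ≤ q ∧ q ≤ j ∧ (j - q) % 2 = 0}

/-- the 2-measure, as the cardinality of `R(f)`. -/
def mu2 (f : ℕ → ℕ) : ℕ := (Rset f).ncard

/-- The Burge demotion operator `∂`. -/
def dB (f : ℕ → ℕ) : ℕ → ℕ := fun n =>
  if n = 0 then 0
  else f n - (if n ∈ Rset f then 1 else 0) + (if n + 1 ∈ Rset f then 1 else 0)

/-- The promotion operator `α`. -/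
def aB (f : ℕ → ℕ) : ℕ → ℕ := fun n =>
  if n = 0 then 0
  else f n - (if n ∈ Lset f then 1 else 0) + (if n - 1 ∈ Lset f then 1 else 0)

/-- the shift `(f₂, f₃, …)`; on partitions this is `P ↦ P - 1`. -/
def tailF (f : ℕ → ℕ) : ℕ → ℕ := fun n => if n = 0 then 0 else f (n + 1)

/-- The operator `β`: `β(f) = (f₁ + 1, α(f₂, f₃, …))`. -/
def bB (f : ℕ → ℕ) : ℕ → ℕ := fun n =>
  if n = 0 then 0 else if n = 1 then f 1 + 1 else aB (tailF f) (n - 1)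

/-- the zero sequence (empty partition). -/
def zeroF : ℕ → ℕ := fun _ => 0

/-- `k` minimal with `∂^[k] f = 0`. -/
def chainK (f : ℕ → ℕ) : ℕ :=
  if h : ∃ m, dB^[m] f = zeroF then Nat.find h else 0

/-- The Burge code of `f`, as a list of letters; `false` = `a`, `true` = `b`.
The `i`-th letter (0-indexed `i`) records whether `∂^[i] f ∈ B`, i.e. `1 ∈ R(∂^[i] f)`. -/
def burgeCode (f : ℕ → ℕ) : List Bool :=
  (List.range (chainK f + 1)).map fun i => if 1 ∈ Rset (dB^[i] f) then true else false

/-- descent set of a word: 1-indexed positions `i` with `ωᵢ = b`, `ω_{i+1} = a`. -/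
def descSet (w : List Bool) : Set ℕ :=
  {i | 1 ≤ i ∧ w[i - 1]? = some true ∧ w[i]? = some false}

/-- the descent set of (the Burge code of) a partition. -/
def DesSet (f : ℕ → ℕ) : Set ℕ := descSet (burgeCode f)

/-- `Des(P)` regarded as a partition, via its frequency sequence. -/
def desFreq (f : ℕ → ℕ) : ℕ → ℕ := fun i => if i ∈ DesSet f then 1 else 0

/-- the 2-measure as the maximal size of a subset of the support without
consecutive pairs. -/
def twoMeasure (f : ℕ → ℕ) : ℕ :=
  sSup {n | ∃ T : Finset ℕ, (↑T : Set ℕ) ⊆ suppF f ∧ (∀ x ∈ T, x + 1 ∉ T) ∧ T.card = n}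

/-- evaluation at `i`: `ν_i(f) = i f_i + (i+1) f_{i+1} + 2 ∑_{j>i+1} f_j`, with `ν₀ = ν₁`. -/
def nuI (f : ℕ → ℕ) (i : ℕ) : ℕ :=
  (max i 1) * f (max i 1) + (max i 1 + 1) * f (max i 1 + 1)
    + 2 * ∑ᶠ j ∈ {j : ℕ | max i 1 + 1 < j}, f j

/-- annihilation at `i`: `ρ_i(f) = (f₁, …, f_{i-1}, f_{i+2}, f_{i+3}, …)`, with `ρ₀ = ρ₁`. -/
def rhoI (f : ℕ → ℕ) (i : ℕ) : ℕ → ℕ := fun n =>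
  if n = 0 then 0 else if n < max i 1 then f n else f (n + 2)

/-- `i ≥ 1` is right admissible in `f`. -/
def RightAdm (f : ℕ → ℕ) (i : ℕ) : Prop :=
  1 ≤ i ∧ 0 < f i ∧ (0 < f (i + 1) ∨ (f (i - 1) = 0 ∧ f (i + 1) = 0))

/-- `i ≥ 0` is left admissible in `f`. -/
def LeftAdm (f : ℕ → ℕ) (i : ℕ) : Prop :=
  0 < f (i + 1) ∧ (0 < f i ∨ (f i = 0 ∧ f (i + 2) = 0))

/-- `i` is a maximal index for `f`: `ν_i(f)` is nonzero and maximal. -/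
def MaxIdx (f : ℕ → ℕ) (i : ℕ) : Prop :=
  nuI f i ≠ 0 ∧ ∀ j, nuI f j ≤ nuI f i

end

/-! For finitely supported `f`, `R(f)` is the unique set with `q ∈ R(f) ↔ 1 ≤ q ∧ f q ≠ 0 ∧
q + 1 ∉ R(f)`. Since `i + 1 ∈ R(f)`, neither `i` nor `i + 2` lies in `R(f)`; hence the same
recursion shows that `R(ρ_i f)` is `R(f)` with the positions `i, i + 1` cut out, and `∂`
commutes with `ρ_i`. For `ν_i`, `∂` moves one unit from part `i + 1` to part `i`, and above
`i + 1` it only moves units between parts that are all weighted by `2`. -/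

open Function

section Rset

variable {f : ℕ → ℕ} {q : ℕ}

lemma ne_zero_of_mem_Rset (h : q ∈ Rset f) : f q ≠ 0 := by
  obtain ⟨c, d, hs, hcq, hqd, -⟩ := h
  exact hs.2.2.1 q hcq hqd

lemma exists_spread_left_end (hq : 1 ≤ q) :
    ∃ c, 1 ≤ c ∧ c ≤ q ∧ (c = 1 ∨ f (c - 1) = 0) ∧ ∀ k, c ≤ k → k < q → f k ≠ 0 := by
  induction q, hq using Nat.le_induction with
  | base => exact ⟨1, le_rfl, le_rfl, Or.inl rfl, fun k h1 h2 => by omega⟩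
  | succ q hq ih =>
    by_cases hfq : f q = 0
    · exact ⟨q + 1, by omega, le_rfl, Or.inr hfq, fun k h1 h2 => by omega⟩
    · obtain ⟨c, hc1, hcq, hleft, hrun⟩ := ih
      refine ⟨c, hc1, by omega, hleft, fun k h1 h2 => ?_⟩
      rcases Nat.lt_succ_iff_lt_or_eq.mp h2 with h | rfl
      · exact hrun k h1 h
      · exact hfq

-- The left end of a spread always exists, so only the run to the right of `q` matters.
lemma mem_Rset_iff_exists_run : q ∈ Rset f ↔ 1 ≤ q ∧ ∃ j, q ≤ j ∧
    (∀ k, q ≤ k → k ≤ j → f k ≠ 0) ∧ f (j + 1) = 0 ∧ (j - q) % 2 = 0 := by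
  constructor
  · rintro ⟨c, j, ⟨hc1, -, hrun, -, hj⟩, hcq, hqj, hpar⟩
    exact ⟨by omega, j, hqj, fun k h1 h2 => hrun k (by omega) h2, hj, hpar⟩
  · rintro ⟨hq, j, hqj, hrun, hj, hpar⟩
    obtain ⟨c, hc1, hcq, hleft, hrun'⟩ := exists_spread_left_end (f := f) hq
    refine ⟨c, j, ⟨hc1, by omega, fun k h1 h2 => ?_, hleft, hj⟩, hcq, hqj, hpar⟩
    rcases Nat.lt_or_ge k q with h | h
    · exact hrun' k h1 h
    · exact hrun k h h2

lemma succ_notMem_Rset (h : q ∈ Rset f) : q + 1 ∉ Rset f := by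
  rw [mem_Rset_iff_exists_run] at h ⊢
  rintro ⟨-, j', hqj', hrun', hj', hpar'⟩
  obtain ⟨-, j, hqj, hrun, hj, hpar⟩ := h
  have hjj' : j = j' := by
    by_contra hne
    rcases Nat.lt_or_gt_of_ne hne with hlt | hlt
    · exact hrun' (j + 1) (by omega) (by omega) hj
    · exact hrun (j' + 1) (by omega) (by omega) hj'
  omega

variable {N : ℕ}

lemma exists_nonzero_run_end (hN : ∀ k, N ≤ k → f k = 0) (hq : f q ≠ 0) :
    ∃ j, q ≤ j ∧ (∀ k, q ≤ k → k ≤ j → f k ≠ 0) ∧ f (j + 1) = 0 := by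
  have hex : ∃ m, f (q + m + 1) = 0 := ⟨N, hN _ (by omega)⟩
  refine ⟨q + Nat.find hex, by omega, fun k h1 h2 => ?_, Nat.find_spec hex⟩
  rcases Nat.eq_or_lt_of_le h1 with rfl | h
  · exact hq
  · have := Nat.find_min hex (m := k - q - 1) (by omega)
    rwa [show q + (k - q - 1) + 1 = k by omega] at this

lemma mem_Rset_iff (hN : ∀ k, N ≤ k → f k = 0) :
    q ∈ Rset f ↔ 1 ≤ q ∧ f q ≠ 0 ∧ q + 1 ∉ Rset f := by
  refine ⟨fun h => ⟨(mem_Rset_iff_exists_run.mp h).1, ne_zero_of_mem_Rset h,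
    succ_notMem_Rset h⟩, fun ⟨hq, hfq, hsucc⟩ => ?_⟩
  obtain ⟨j, hqj, hrun, hj⟩ := exists_nonzero_run_end hN hfq
  refine mem_Rset_iff_exists_run.mpr ⟨hq, j, hqj, hrun, hj, ?_⟩
  rcases Nat.eq_or_lt_of_le hqj with rfl | hlt
  · simp
  · rw [mem_Rset_iff_exists_run] at hsucc
    have : (j - (q + 1)) % 2 ≠ 0 := fun hpar =>
      hsucc ⟨by omega, j, hlt, fun k h1 h2 => hrun k (by omega) h2, hj, hpar⟩
    omega

lemma Rset_eq_of_forall_mem_iff (hN : ∀ k, N ≤ k → f k = 0) {S : Set ℕ}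
    (hS : ∀ q, q ∈ S ↔ 1 ≤ q ∧ f q ≠ 0 ∧ q + 1 ∉ S) : Rset f = S := by
  have key : ∀ d q, N ≤ q + d → (q ∈ Rset f ↔ q ∈ S) := by
    intro d
    induction d with
    | zero =>
      intro q hq
      have hfq : f q = 0 := hN q hq
      exact iff_of_false (fun h => ne_zero_of_mem_Rset h hfq) (fun h => ((hS q).mp h).2.1 hfq)
    | succ d ih =>
      intro q hq
      rw [mem_Rset_iff hN, hS q, ih (q + 1) (by omega)]
  exact Set.ext fun q => key N q (by omega)

end Rset

section Annihilation

variable {f : ℕ → ℕ} {i n N : ℕ}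

lemma rhoI_apply_of_lt (hn0 : n ≠ 0) (hn : n < i) : rhoI f i n = f n := by
  unfold rhoI
  split_ifs <;> first | rfl | omega

lemma rhoI_apply_of_le (hi : 1 ≤ i) (hn : i ≤ n) : rhoI f i n = f (n + 2) := by
  unfold rhoI
  split_ifs <;> first | rfl | omega

lemma notMem_Rset_of_succ_mem (h : i + 1 ∈ Rset f) : i ∉ Rset f := fun hi =>
  succ_notMem_Rset hi h

lemma Rset_rhoI (hN : ∀ k, N ≤ k → f k = 0) (hi : 1 ≤ i) (hR : i + 1 ∈ Rset f) :
    Rset (rhoI f i) = {m | 1 ≤ m ∧ if m < i then m ∈ Rset f else m + 2 ∈ Rset f} := by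
  have hρN : ∀ k, N ≤ k → rhoI f i k = 0 := fun k hk => by
    rcases Nat.eq_zero_or_pos k with rfl | hk0
    · rfl
    rcases Nat.lt_or_ge k i with h | h
    · rw [rhoI_apply_of_lt (by omega) h, hN k hk]
    · rw [rhoI_apply_of_le hi h, hN (k + 2) (by omega)]
  refine Rset_eq_of_forall_mem_iff hρN fun m => ?_
  rw [Set.mem_ofPred_eq]
  rcases Nat.eq_zero_or_pos m with rfl | hm0
  · simp
  rcases Nat.lt_or_ge m i with hm | hm
  · rw [rhoI_apply_of_lt (by omega) hm, if_pos hm, mem_Rset_iff hN]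
    rcases Nat.lt_or_ge (m + 1) i with hm1 | hm1
    · simp [hm1]
    · have hmi : m + 1 = i := by omega
      simp [hmi, notMem_Rset_of_succ_mem hR, succ_notMem_Rset hR]
  · rw [rhoI_apply_of_le hi hm, if_neg (by omega), mem_Rset_iff hN]
    simp [show ¬ m + 1 < i by omega]

lemma dB_rhoI (hN : ∀ k, N ≤ k → f k = 0) (hi : 1 ≤ i) (hR : i + 1 ∈ Rset f) :
    rhoI (dB f) i = dB (rhoI f i) := by
  funext n
  rcases Nat.eq_zero_or_pos n with rfl | hn
  · simp [rhoI, dB]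
  rcases Nat.lt_or_ge n i with hni | hni
  · rw [rhoI_apply_of_lt (by omega) hni]
    simp only [dB, Rset_rhoI hN hi hR, Set.mem_ofPred_eq, rhoI_apply_of_lt (by omega) hni]
    rcases Nat.lt_or_ge (n + 1) i with hn1 | hn1
    · simp [hni, hn1, show 1 ≤ n by omega]
    · have hin : n + 1 = i := by omega
      simp [hni, hin, show 1 ≤ n by omega, notMem_Rset_of_succ_mem hR, succ_notMem_Rset hR]
  · rw [rhoI_apply_of_le hi hni]
    simp only [dB, Rset_rhoI hN hi hR, Set.mem_ofPred_eq, rhoI_apply_of_le hi hni]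
    simp [show ¬ n < i by omega, show ¬ n + 1 < i by omega, show 1 ≤ n by omega,
      show n ≠ 0 by omega]

end Annihilation

section Evaluation

variable {f : ℕ → ℕ}

lemma dB_add_ite_mem_Rset {j : ℕ} (hj : j ≠ 0) :
    dB f j + (if j ∈ Rset f then 1 else 0) = f j + (if j + 1 ∈ Rset f then 1 else 0) := by
  unfold dB
  rw [if_neg hj]
  by_cases h : j ∈ Rset f
  · have := ne_zero_of_mem_Rset h
    split_ifs <;> omega
  · split_ifs <;> omega

lemma finsum_mem_Ioi_dB {n : ℕ} (hfin : (support f).Finite) (hn : n + 1 ∉ Rset f) :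
    ∑ᶠ j ∈ {j : ℕ | n < j}, dB f j = ∑ᶠ j ∈ {j : ℕ | n < j}, f j := by
  set r : ℕ → ℕ := fun j => if j ∈ Rset f then 1 else 0 with hr
  have hr_fin : (support r).Finite := hfin.subset fun j hj =>
    ne_zero_of_mem_Rset (of_not_not fun h => hj (if_neg h))
  have hr_succ_fin : (support fun j => r (j + 1)).Finite := by
    change (support (r ∘ (· + 1))).Finite
    rw [support_comp_eq_preimage]
    exact hr_fin.preimage (add_left_injective 1).injOn
  have hdB_fin : (support (dB f)).Finite := (hfin.union hr_succ_fin).subset fun j hj => by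
    have hj0 : j ≠ 0 := by rintro rfl; exact hj rfl
    have := dB_add_ite_mem_Rset (f := f) hj0
    simp only [mem_support, Set.mem_union, hr] at hj ⊢
    split_ifs at this ⊢ <;> omega
  have hshift : ∑ᶠ j ∈ {j : ℕ | n < j}, r (j + 1) = ∑ᶠ j ∈ {j : ℕ | n < j}, r j := by
    rw [← finsum_mem_image (add_left_injective 1).injOn]
    refine finsum_mem_inter_support_eq r _ _ (Set.ext fun j => ?_)
    simp only [Set.mem_inter_iff, Set.mem_image, Set.mem_ofPred_eq, mem_support]
    constructor
    · rintro ⟨⟨k, hk, rfl⟩, h⟩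
      exact ⟨by omega, h⟩
    · rintro ⟨hj, h⟩
      have hj' : n + 1 < j := by
        by_contra hle
        exact h (by rw [show j = n + 1 by omega]; exact if_neg hn)
      exact ⟨⟨j - 1, by omega, by omega⟩, h⟩
  have key : ∑ᶠ j ∈ {j : ℕ | n < j}, (dB f j + r j) = ∑ᶠ j ∈ {j : ℕ | n < j}, (f j + r (j + 1)) :=
    finsum_mem_congr rfl fun j hj => dB_add_ite_mem_Rset (by simp at hj; omega)
  rw [finsum_mem_add_distrib' (hdB_fin.inter_of_right _) (hr_fin.inter_of_right _),
    finsum_mem_add_distrib' (hfin.inter_of_right _) (hr_succ_fin.inter_of_right _), hshift] at key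
  exact Nat.add_right_cancel key

lemma nuI_dB_add_one {i : ℕ} (hfin : (support f).Finite) (hi : 1 ≤ i) (hR : i + 1 ∈ Rset f) :
    nuI (dB f) i + 1 = nuI f i := by
  have hi2 : i + 2 ∉ Rset f := succ_notMem_Rset hR
  have hdi : dB f i = f i + 1 := by
    have := dB_add_ite_mem_Rset (f := f) (j := i) (by omega)
    simp only [notMem_Rset_of_succ_mem hR, hR, if_false, if_true] at this
    omega
  have hdi1 : dB f (i + 1) + 1 = f (i + 1) := by
    have := dB_add_ite_mem_Rset (f := f) (j := i + 1) (by omega)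
    simp only [hi2, hR, if_false, if_true] at this
    omega
  have hmax : max i 1 = i := max_eq_left hi
  simp only [nuI, hmax, finsum_mem_Ioi_dB hfin hi2]
  rw [hdi, ← hdi1]
  ring

end Evaluation

/-- if `i ≥ 1` and `i+1 ∈ R(f)`, then `ν_i(∂f) = ν_i(f) - 1` and
`ρ_i(∂f) = ∂(ρ_i(f))`. -/
theorem stmt17 (f : ℕ → ℕ) (hf : IsFreq f) (i : ℕ) (hi : 1 ≤ i)
    (hR : i + 1 ∈ Rset f) :
    nuI (dB f) i = nuI f i - 1 ∧ rhoI (dB f) i = dB (rhoI f i) := by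
  obtain ⟨M, hM⟩ := hf.2.bddAbove
  have hN : ∀ k, M + 1 ≤ k → f k = 0 := fun k hk =>
    notMem_support.mp fun h => absurd (hM h) (by omega)
  refine ⟨?_, dB_rhoI hN hi hR⟩
  have := nuI_dB_add_one hf.2 hi hR
  omega
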